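/- arXiv:1702.05214 — 6 statements merged into one kernel-verified Lean document; each statement's English description precedes it below -/
import Mathlib

section
/- (Prediction step sufficiency, Lemma 1.) Let n ≥ 1, let P' and Q be symmetric positive definite real n×n matrices, let J, E, B be real n×n matrices, let c ∈ ℝⁿ, and let τᵘ, τʷ, τᶠ ≥ 0 be nonnegative reals. Assume the linear matrix inequality feasibility condition holds in the following pointwise quadratic-form form: for every t ∈ ℝ and all u, w, d ∈ ℝⁿ, setting z = t·c + J·E·u + w + B·d, one has zᵀ (P')⁻¹ z ≤ (1 − τᵘ − τʷ − τᶠ)·t² + τᵘ·‖u‖² + τʷ·(wᵀ Q⁻¹ w) + τᶠ·‖d‖². Then for all u, w, d ∈ ℝⁿ satisfying ‖u‖ ≤ 1, wᵀ Q⁻¹ w ≤ 1, and ‖d‖ ≤ 1, the vector v = c + J·E·u + w + B·d satisfies vᵀ (P')⁻¹ v ≤ 1. -/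
open Matrix

/-- Prediction step sufficiency, Lemma 1. If the S-procedure
quadratic-form inequality holds for all `(t, u, w, d)`, then every predicted
state `c + J·E·u + w + B·d` with `‖u‖ ≤ 1`, `wᵀQ⁻¹w ≤ 1`, `‖d‖ ≤ 1` lies in the
ellipsoid with shape matrix `P'`. -/
theorem prediction_step_sufficiency {n : ℕ} (hn : 1 ≤ n)
    (P' Q : Matrix (Fin n) (Fin n) ℝ) (hP' : P'.PosDef) (hQ : Q.PosDef)
    (J E B : Matrix (Fin n) (Fin n) ℝ) (c : Fin n → ℝ)
    (τu τw τf : ℝ) (hτu : 0 ≤ τu) (hτw : 0 ≤ τw) (hτf : 0 ≤ τf)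
    (hLMI : ∀ (t : ℝ) (u w d : Fin n → ℝ),
      (t • c + (J * E) *ᵥ u + w + B *ᵥ d) ⬝ᵥ
          (P'⁻¹ *ᵥ (t • c + (J * E) *ᵥ u + w + B *ᵥ d)) ≤
        (1 - τu - τw - τf) * t ^ 2 + τu * (u ⬝ᵥ u) + τw * (w ⬝ᵥ (Q⁻¹ *ᵥ w))
          + τf * (d ⬝ᵥ d)) :
    ∀ (u w d : Fin n → ℝ),
      Real.sqrt (u ⬝ᵥ u) ≤ 1 → w ⬝ᵥ (Q⁻¹ *ᵥ w) ≤ 1 → Real.sqrt (d ⬝ᵥ d) ≤ 1 →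
      (c + (J * E) *ᵥ u + w + B *ᵥ d) ⬝ᵥ
          (P'⁻¹ *ᵥ (c + (J * E) *ᵥ u + w + B *ᵥ d)) ≤ 1 := by
  intro u w d hu hw hd
  have huu : u ⬝ᵥ u ≤ 1 := by
    have h0 : (0:ℝ) ≤ u ⬝ᵥ u := by
      apply Finset.sum_nonneg; intro i _; exact mul_self_nonneg _
    nlinarith [Real.sq_sqrt h0, Real.sqrt_nonneg (u ⬝ᵥ u)]
  have hdd : d ⬝ᵥ d ≤ 1 := by
    have h0 : (0:ℝ) ≤ d ⬝ᵥ d := by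
      apply Finset.sum_nonneg; intro i _; exact mul_self_nonneg _
    nlinarith [Real.sq_sqrt h0, Real.sqrt_nonneg (d ⬝ᵥ d)]
  have h := hLMI 1 u w d
  simp only [one_smul, one_pow, mul_one] at h
  nlinarith [mul_le_mul_of_nonneg_left huu hτu, mul_le_mul_of_nonneg_left hw hτw,
    mul_le_mul_of_nonneg_left hdd hτf]
end

section
/- (Theorem 1, containment part: validity of the analytic prediction ellipsoid.) Let n ≥ 1, let Q be a symmetric positive definite real n×n matrix, let E, B, J be real n×n matrices, and set P = E·Eᵀ and P_f = B·Bᵀ. Let τᵘ, τʷ, τᶠ > 0 with τᵘ + τʷ + τᶠ ≤ 1, and define P' = (1/τᵘ)·J·P·Jᵀ + (1/τᶠ)·P_f + (1/τʷ)·Q. Then P' is symmetric positive definite, and for all u, w, d ∈ ℝⁿ with ‖u‖ ≤ 1, wᵀ Q⁻¹ w ≤ 1, and ‖d‖ ≤ 1, the vector v = J·E·u + B·d + w satisfies vᵀ (P')⁻¹ v ≤ 1. -/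
open Matrix

lemma cs_vec {n : ℕ} (x y : Fin n → ℝ) : (x ⬝ᵥ y)^2 ≤ (x ⬝ᵥ x) * (y ⬝ᵥ y) := by
  have := Finset.sum_mul_sq_le_sq_mul_sq Finset.univ x y
  simpa [dotProduct, sq] using this

lemma dp_self_nonneg {n : ℕ} (x : Fin n → ℝ) : 0 ≤ x ⬝ᵥ x :=
  Finset.sum_nonneg fun _ _ => mul_self_nonneg _

lemma quad_factor {n : ℕ} (A : Matrix (Fin n) (Fin n) ℝ) (y : Fin n → ℝ) :
    y ⬝ᵥ ((A * Aᵀ) *ᵥ y) = (y ᵥ* A) ⬝ᵥ (y ᵥ* A) := by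
  rw [← mulVec_mulVec, dotProduct_mulVec, mulVec_transpose]

lemma combine3 (a b c A B C τu τf τw : ℝ) (hτu : 0 < τu) (hτf : 0 < τf) (hτw : 0 < τw)
    (hsum : τu + τw + τf ≤ 1) (ha : a^2 ≤ A) (hb : b^2 ≤ B) (hc : c^2 ≤ C) :
    (a+b+c)^2 ≤ (1/τu)*A + (1/τf)*B + (1/τw)*C := by
  have hpos : 0 < τu*τf*τw := by positivity
  rw [← sub_nonneg]
  have heq : (1/τu)*A + (1/τf)*B + (1/τw)*C - (a+b+c)^2
      = (τf*τw*A + τu*τw*B + τu*τf*C - τu*τf*τw*(a+b+c)^2)/(τu*τf*τw) := by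
    field_simp
  rw [heq]
  apply div_nonneg _ hpos.le
  have hX : (0:ℝ) ≤ τf*τw*a^2 + τu*τw*b^2 + τu*τf*c^2 := by positivity
  have s1 : τu*τf*τw*(a+b+c)^2 ≤ (τu+τw+τf)*(τf*τw*a^2 + τu*τw*b^2 + τu*τf*c^2) := by
    nlinarith [mul_nonneg hτw.le (sq_nonneg (τf*a - τu*b)),
      mul_nonneg hτf.le (sq_nonneg (τw*a - τu*c)),
      mul_nonneg hτu.le (sq_nonneg (τw*b - τf*c))]
  have s2 : (τu+τw+τf)*(τf*τw*a^2 + τu*τw*b^2 + τu*τf*c^2)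
      ≤ τf*τw*a^2 + τu*τw*b^2 + τu*τf*c^2 := by nlinarith
  have s3 : τf*τw*a^2 + τu*τw*b^2 + τu*τf*c^2 ≤ τf*τw*A + τu*τw*B + τu*τf*C := by
    have := mul_le_mul_of_nonneg_left ha (mul_pos hτf hτw).le
    have := mul_le_mul_of_nonneg_left hb (mul_pos hτu hτw).le
    have := mul_le_mul_of_nonneg_left hc (mul_pos hτu hτf).le
    linarith
  linarith

/-- Theorem 1, containment part. With `P = E·Eᵀ`, `P_f = B·Bᵀ`,
multipliers `τᵘ, τʷ, τᶠ > 0` with sum at most `1`, the matrix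
`P' = J·P·Jᵀ/τᵘ + P_f/τᶠ + Q/τʷ` is symmetric positive definite and the
ellipsoid with shape matrix `P'` contains all `J·E·u + B·d + w` with
`‖u‖ ≤ 1`, `wᵀQ⁻¹w ≤ 1`, `‖d‖ ≤ 1`. -/
theorem analytic_prediction_ellipsoid_containment {n : ℕ} (hn : 1 ≤ n)
    (Q : Matrix (Fin n) (Fin n) ℝ) (hQ : Q.PosDef)
    (E B J : Matrix (Fin n) (Fin n) ℝ)
    (P Pf : Matrix (Fin n) (Fin n) ℝ) (hP : P = E * Eᵀ) (hPf : Pf = B * Bᵀ)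
    (τu τw τf : ℝ) (hτu : 0 < τu) (hτw : 0 < τw) (hτf : 0 < τf)
    (hsum : τu + τw + τf ≤ 1)
    (P' : Matrix (Fin n) (Fin n) ℝ)
    (hP' : P' = (1 / τu) • (J * P * Jᵀ) + (1 / τf) • Pf + (1 / τw) • Q) :
    P'.PosDef ∧
      ∀ (u w d : Fin n → ℝ),
        Real.sqrt (u ⬝ᵥ u) ≤ 1 → w ⬝ᵥ (Q⁻¹ *ᵥ w) ≤ 1 → Real.sqrt (d ⬝ᵥ d) ≤ 1 →
        ((J * E) *ᵥ u + B *ᵥ d + w) ⬝ᵥ (P'⁻¹ *ᵥ ((J * E) *ᵥ u + B *ᵥ d + w)) ≤ 1 := by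
  have hXfac : J * P * Jᵀ = (J * E) * (J * E)ᵀ := by
    rw [hP]; simp [transpose_mul, Matrix.mul_assoc]
  have hQs : Qᵀ = Q := by
    have := hQ.1
    rwa [IsHermitian, conjTranspose_eq_transpose_of_trivial] at this
  -- quadratic form expansion of P'
  have hexp : ∀ y : Fin n → ℝ, y ⬝ᵥ (P' *ᵥ y)
      = (1/τu) * (y ⬝ᵥ (((J*E) * (J*E)ᵀ) *ᵥ y)) + (1/τf) * (y ⬝ᵥ ((B * Bᵀ) *ᵥ y))
        + (1/τw) * (y ⬝ᵥ (Q *ᵥ y)) := by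
    intro y
    rw [hP', hXfac, hPf]
    simp [add_mulVec, smul_mulVec, dotProduct_add, dotProduct_smul, smul_eq_mul]
  -- positive definiteness
  have hPD : P'.PosDef := by
    refine posDef_iff_dotProduct_mulVec.mpr ⟨?_, ?_⟩
    · show P'ᴴ = P'
      rw [conjTranspose_eq_transpose_of_trivial, hP', hXfac, hPf]
      simp [transpose_add, transpose_smul, transpose_mul, hQs, Matrix.mul_assoc]
    · intro x hx
      have hst : star x = x := by simp
      rw [hst, hexp x]
      have h1 : 0 ≤ x ⬝ᵥ (((J*E) * (J*E)ᵀ) *ᵥ x) := by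
        rw [quad_factor]; exact dp_self_nonneg _
      have h2 : 0 ≤ x ⬝ᵥ ((B * Bᵀ) *ᵥ x) := by
        rw [quad_factor]; exact dp_self_nonneg _
      have h3 : 0 < x ⬝ᵥ (Q *ᵥ x) := by
        have := (posDef_iff_dotProduct_mulVec.mp hQ).2 hx
        rwa [hst] at this
      have t1 : 0 < 1/τu := by positivity
      have t2 : 0 < 1/τf := by positivity
      have t3 : 0 < 1/τw := by positivity
      nlinarith
  refine ⟨hPD, ?_⟩
  intro u w d hu hw hd
  have hu2 : u ⬝ᵥ u ≤ 1 := by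
    nlinarith [Real.sq_sqrt (dp_self_nonneg u), Real.sqrt_nonneg (u ⬝ᵥ u)]
  have hd2 : d ⬝ᵥ d ≤ 1 := by
    nlinarith [Real.sq_sqrt (dp_self_nonneg d), Real.sqrt_nonneg (d ⬝ᵥ d)]
  set v := (J * E) *ᵥ u + B *ᵥ d + w with hv
  -- key pointwise inequality
  have key : ∀ y : Fin n → ℝ, (y ⬝ᵥ v)^2 ≤ y ⬝ᵥ (P' *ᵥ y) := by
    intro y
    have hdv : y ⬝ᵥ v = y ⬝ᵥ ((J*E) *ᵥ u) + y ⬝ᵥ (B *ᵥ d) + y ⬝ᵥ w := by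
      simp [hv, dotProduct_add]
    have ha : (y ⬝ᵥ ((J*E) *ᵥ u))^2 ≤ y ⬝ᵥ (((J*E) * (J*E)ᵀ) *ᵥ y) := by
      rw [dotProduct_mulVec, quad_factor]
      have h1 := cs_vec (y ᵥ* (J*E)) u
      nlinarith [dp_self_nonneg (y ᵥ* (J*E))]
    have hb : (y ⬝ᵥ (B *ᵥ d))^2 ≤ y ⬝ᵥ ((B * Bᵀ) *ᵥ y) := by
      rw [dotProduct_mulVec, quad_factor]
      have h1 := cs_vec (y ᵥ* B) d
      nlinarith [dp_self_nonneg (y ᵥ* B)]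
    have hc : (y ⬝ᵥ w)^2 ≤ y ⬝ᵥ (Q *ᵥ y) := by
      open scoped MatrixOrder in
      obtain ⟨Aq, hAq⟩ := CStarAlgebra.nonneg_iff_eq_star_mul_self.mp hQ.posSemidef.nonneg
      rw [star_eq_conjTranspose, conjTranspose_eq_transpose_of_trivial] at hAq
      have hform : ∀ p q : Fin n → ℝ, p ⬝ᵥ (Q *ᵥ q) = (Aq *ᵥ p) ⬝ᵥ (Aq *ᵥ q) := by
        intro p q
        rw [hAq, ← mulVec_mulVec, dotProduct_mulVec, vecMul_transpose]
      have hdet : IsUnit Q.det := isUnit_iff_ne_zero.mpr hQ.det_pos.ne'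
      have hw' : Q *ᵥ (Q⁻¹ *ᵥ w) = w := by
        rw [mulVec_mulVec, mul_nonsing_inv Q hdet, one_mulVec]
      set z := Q⁻¹ *ᵥ w with hz
      have hyw : y ⬝ᵥ w = (Aq *ᵥ y) ⬝ᵥ (Aq *ᵥ z) := by rw [← hform, hw']
      have hzz : (Aq *ᵥ z) ⬝ᵥ (Aq *ᵥ z) = w ⬝ᵥ (Q⁻¹ *ᵥ w) := by
        rw [← hform, hw', dotProduct_comm]
      have hyy : (Aq *ᵥ y) ⬝ᵥ (Aq *ᵥ y) = y ⬝ᵥ (Q *ᵥ y) := (hform y y).symm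
      have h1 := cs_vec (Aq *ᵥ y) (Aq *ᵥ z)
      rw [hyw]
      nlinarith [dp_self_nonneg (Aq *ᵥ y), dp_self_nonneg (Aq *ᵥ z)]
    rw [hexp y, hdv]
    exact combine3 _ _ _ _ _ _ _ _ _ hτu hτf hτw hsum ha hb hc
  -- conclude
  have hdet' : IsUnit P'.det := isUnit_iff_ne_zero.mpr hPD.det_pos.ne'
  have hinv : P' *ᵥ (P'⁻¹ *ᵥ v) = v := by
    rw [mulVec_mulVec, mul_nonsing_inv _ hdet', one_mulVec]
  have hk := key (P'⁻¹ *ᵥ v)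
  rw [hinv] at hk
  have h1 : (P'⁻¹ *ᵥ v) ⬝ᵥ v = v ⬝ᵥ (P'⁻¹ *ᵥ v) := dotProduct_comm _ _
  rw [h1] at hk
  have ht0 : 0 ≤ v ⬝ᵥ (P'⁻¹ *ᵥ v) := by
    have := (posSemidef_iff_dotProduct_mulVec.mp hPD.inv.posSemidef).2 v
    simpa using this
  nlinarith [hk, ht0]
end

section
/- (Fusion update step sufficiency, Lemma 2, centralized fusion with L sensors.) Let n, m, L ≥ 1. Let P be a symmetric positive definite real n×n matrix, E' a real n×n matrix, c₀ ∈ ℝⁿ, and for each i ∈ {1,…,L} let Jᵢ be a real m×n matrix, Bᵢ a real m×m matrix, Rᵢ a symmetric positive definite real m×m matrix, and gᵢ ∈ ℝᵐ. Let τᵘ ≥ 0, and for each i let τᵢᵛ ≥ 0, τᵢʰ ≥ 0, and τᵢʸ ∈ ℝ. Assume that for every t ∈ ℝ, u ∈ ℝⁿ, and families v, d : {1,…,L} → ℝᵐ, setting z = t·c₀ + E'·u and, for each i, ψᵢ = t·gᵢ + Jᵢ·E'·u + vᵢ + Bᵢ·dᵢ, one has zᵀ P⁻¹ z ≤ (1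 − τᵘ − Σᵢ τᵢᵛ − Σᵢ τᵢʰ)·t² + τᵘ·‖u‖² + Σᵢ τᵢᵛ·(vᵢᵀ Rᵢ⁻¹ vᵢ) + Σᵢ τᵢʰ·‖dᵢ‖² + Σᵢ τᵢʸ·‖ψᵢ‖². Then for all u ∈ ℝⁿ and v, d : {1,…,L} → ℝᵐ satisfying ‖u‖ ≤ 1, vᵢᵀ Rᵢ⁻¹ vᵢ ≤ 1 and ‖dᵢ‖ ≤ 1 for every i, and the measurement consistency equations gᵢ + Jᵢ·E'·u + vᵢ + Bᵢ·dᵢ = 0 for every i, the vector z = c₀ + E'·u satisfies zᵀ P⁻¹ z ≤ 1. -/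
open Matrix

/-- Fusion update step sufficiency, Lemma 2, centralized fusion
with `L` sensors. If the S-procedure quadratic-form inequality holds, then any
state `c₀ + E'·u` consistent with the measurements (`gᵢ + Jᵢ·E'·u + vᵢ + Bᵢ·dᵢ = 0`)
with bounded `u, vᵢ, dᵢ` lies in the fused ellipsoid with shape matrix `P`. -/
theorem fusion_update_sufficiency {n m L : ℕ}
    (hn : 1 ≤ n) (hm : 1 ≤ m) (hL : 1 ≤ L)
    (P : Matrix (Fin n) (Fin n) ℝ) (hP : P.PosDef)
    (E' : Matrix (Fin n) (Fin n) ℝ) (c₀ : Fin n → ℝ)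
    (J : Fin L → Matrix (Fin m) (Fin n) ℝ)
    (B : Fin L → Matrix (Fin m) (Fin m) ℝ)
    (R : Fin L → Matrix (Fin m) (Fin m) ℝ) (hR : ∀ i, (R i).PosDef)
    (g : Fin L → Fin m → ℝ)
    (τu : ℝ) (hτu : 0 ≤ τu)
    (τv τh : Fin L → ℝ) (hτv : ∀ i, 0 ≤ τv i) (hτh : ∀ i, 0 ≤ τh i)
    (τy : Fin L → ℝ)
    (hLMI : ∀ (t : ℝ) (u : Fin n → ℝ) (v d : Fin L → Fin m → ℝ),
      (t • c₀ + E' *ᵥ u) ⬝ᵥ (P⁻¹ *ᵥ (t • c₀ + E' *ᵥ u)) ≤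
        (1 - τu - ∑ i, τv i - ∑ i, τh i) * t ^ 2 + τu * (u ⬝ᵥ u)
        + ∑ i, τv i * (v i ⬝ᵥ ((R i)⁻¹ *ᵥ v i))
        + ∑ i, τh i * (d i ⬝ᵥ d i)
        + ∑ i, τy i *
            ((t • g i + (J i * E') *ᵥ u + v i + B i *ᵥ d i) ⬝ᵥ
              (t • g i + (J i * E') *ᵥ u + v i + B i *ᵥ d i))) :
    ∀ (u : Fin n → ℝ) (v d : Fin L → Fin m → ℝ),
      Real.sqrt (u ⬝ᵥ u) ≤ 1 →
      (∀ i, v i ⬝ᵥ ((R i)⁻¹ *ᵥ v i) ≤ 1) →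
      (∀ i, Real.sqrt (d i ⬝ᵥ d i) ≤ 1) →
      (∀ i, g i + (J i * E') *ᵥ u + v i + B i *ᵥ d i = 0) →
      (c₀ + E' *ᵥ u) ⬝ᵥ (P⁻¹ *ᵥ (c₀ + E' *ᵥ u)) ≤ 1 := by
  intro u v d hu hv hd hmeas
  have huu : u ⬝ᵥ u ≤ 1 := by
    by_contra h
    push_neg at h
    have : (1:ℝ) < Real.sqrt (u ⬝ᵥ u) := by
      have := Real.lt_sqrt (x := 1) (y := u ⬝ᵥ u) (by norm_num)
      simpa using this.mpr (by simpa using h)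
    linarith
  have hdd : ∀ i, d i ⬝ᵥ d i ≤ 1 := by
    intro i
    by_contra h
    push_neg at h
    have : (1:ℝ) < Real.sqrt (d i ⬝ᵥ d i) := by
      have := Real.lt_sqrt (x := 1) (y := d i ⬝ᵥ d i) (by norm_num)
      simpa using this.mpr (by simpa using h)
    linarith [hd i]
  have key := hLMI 1 u v d
  have hψ : ∀ i, (1:ℝ) • g i + (J i * E') *ᵥ u + v i + B i *ᵥ d i = 0 := by
    intro i; simpa using hmeas i
  have hz : (1:ℝ) • c₀ + E' *ᵥ u = c₀ + E' *ᵥ u := by simp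
  rw [hz] at key
  have hsum0 : ∑ i, τy i *
      (((1:ℝ) • g i + (J i * E') *ᵥ u + v i + B i *ᵥ d i) ⬝ᵥ
        ((1:ℝ) • g i + (J i * E') *ᵥ u + v i + B i *ᵥ d i)) = 0 := by
    apply Finset.sum_eq_zero
    intro i _
    rw [hψ i]
    simp
  rw [hsum0] at key
  have h1 : τu * (u ⬝ᵥ u) ≤ τu := by
    calc τu * (u ⬝ᵥ u) ≤ τu * 1 := mul_le_mul_of_nonneg_left huu hτu
    _ = τu := mul_one _
  have h2 : ∑ i, τv i * (v i ⬝ᵥ ((R i)⁻¹ *ᵥ v i)) ≤ ∑ i, τv i := by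
    apply Finset.sum_le_sum
    intro i _
    calc τv i * (v i ⬝ᵥ ((R i)⁻¹ *ᵥ v i)) ≤ τv i * 1 :=
      mul_le_mul_of_nonneg_left (hv i) (hτv i)
    _ = τv i := mul_one _
  have h3 : ∑ i, τh i * (d i ⬝ᵥ d i) ≤ ∑ i, τh i := by
    apply Finset.sum_le_sum
    intro i _
    calc τh i * (d i ⬝ᵥ d i) ≤ τh i * 1 :=
      mul_le_mul_of_nonneg_left (hdd i) (hτh i)
    _ = τh i := mul_one _
  nlinarith [key]
end

section
/- (Theorem 2, shape-matrix formula: top-left block of the inverse of the arrow-structured matrix equals the information-filter form.) Let n, m, L ≥ 1. Let A₀ be a symmetric positive definite real n×n matrix, and for each i ∈ {1,…,L} let Sᵢ and Tᵢ be symmetric positive definite real m×m matrices and Jᵢ a real m×n matrix. Let M be the symmetric linear map (block matrix) on ℝⁿ ⊕ (ℝᵐ)^L whose quadratic form is q(x, y) = xᵀA₀x + Σᵢ (Jᵢx − yᵢ)ᵀ Sᵢ (Jᵢx − yᵢ) + Σᵢ yᵢᵀ Tᵢ yᵢ, i.e., M has (0,0)-block A₀ + Σᵢ JᵢᵀSᵢJᵢ,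 (0,i)-block −JᵢᵀSᵢ, (i,i)-block Sᵢ + Tᵢ, and zero (i,j)-blocks for i ≠ j ≥ 1. Then M is positive definite, and the top-left n×n block of M⁻¹ equals (A₀ + Σᵢ Jᵢᵀ·(Sᵢ⁻¹ + Tᵢ⁻¹)⁻¹·Jᵢ)⁻¹. -/
open Matrix

/-- The arrow-structured block matrix on `ℝⁿ ⊕ (ℝᵐ)^L` with `(0,0)`-block
`A₀ + Σᵢ JᵢᵀSᵢJᵢ`, `(0,i)`-block `-JᵢᵀSᵢ`, `(i,0)`-block `-SᵢJᵢ`,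
`(i,i)`-block `Sᵢ + Tᵢ`, and zero off-diagonal blocks among `i ≠ j ≥ 1`. -/
noncomputable def arrowMat {n m L : ℕ}
    (A₀ : Matrix (Fin n) (Fin n) ℝ)
    (S T : Fin L → Matrix (Fin m) (Fin m) ℝ)
    (J : Fin L → Matrix (Fin m) (Fin n) ℝ) :
    Matrix (Fin n ⊕ Fin L × Fin m) (Fin n ⊕ Fin L × Fin m) ℝ :=
  Matrix.of fun p q =>
    match p, q with
    | Sum.inl i, Sum.inl j => (A₀ + ∑ k, (J k)ᵀ * S k * J k) i j
    | Sum.inl i, Sum.inr (k, a) => (-((J k)ᵀ * S k)) i a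
    | Sum.inr (k, a), Sum.inl j => (-(S k * J k)) a j
    | Sum.inr (k, a), Sum.inr (l, b) => if k = l then (S k + T k) a b else 0

lemma key_identity {m : ℕ} {S T : Matrix (Fin m) (Fin m) ℝ} (hS : S.PosDef) (hT : T.PosDef) :
    S - S * (S + T)⁻¹ * S = (S⁻¹ + T⁻¹)⁻¹ := by
  have hSd : IsUnit S.det := hS.det_pos.ne'.isUnit
  have hTd : IsUnit T.det := hT.det_pos.ne'.isUnit
  have hSTd : IsUnit (S + T).det := (hS.add hT).det_pos.ne'.isUnit
  have h1 : S⁻¹ + T⁻¹ = T⁻¹ * (S + T) * S⁻¹ := by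
    rw [Matrix.mul_add, Matrix.add_mul, Matrix.mul_assoc T⁻¹ S S⁻¹,
      Matrix.mul_nonsing_inv S hSd, Matrix.nonsing_inv_mul T hTd, Matrix.mul_one,
      Matrix.one_mul, add_comm]
  have h2 : (S⁻¹ + T⁻¹)⁻¹ = S * (S + T)⁻¹ * T := by
    rw [h1, Matrix.mul_inv_rev, Matrix.mul_inv_rev, Matrix.nonsing_inv_nonsing_inv _ hSd,
      Matrix.nonsing_inv_nonsing_inv _ hTd, Matrix.mul_assoc]
  have h3 : S = S * (S + T)⁻¹ * (S + T) := by
    rw [Matrix.mul_assoc, Matrix.nonsing_inv_mul _ hSTd, Matrix.mul_one]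
  rw [h2]
  calc S - S * (S + T)⁻¹ * S = S * (S + T)⁻¹ * (S + T) - S * (S + T)⁻¹ * S := by rw [← h3]
    _ = S * (S + T)⁻¹ * T := by rw [Matrix.mul_add, add_sub_cancel_left]


/-- Theorem 2, shape-matrix formula. The arrow matrix `M` is
positive definite and the top-left `n×n` block of `M⁻¹` equals
`(A₀ + Σᵢ Jᵢᵀ (Sᵢ⁻¹ + Tᵢ⁻¹)⁻¹ Jᵢ)⁻¹`. -/
theorem arrow_inverse_top_left_block {n m L : ℕ}
    (hn : 1 ≤ n) (hm : 1 ≤ m) (hL : 1 ≤ L)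
    (A₀ : Matrix (Fin n) (Fin n) ℝ) (hA₀ : A₀.PosDef)
    (S T : Fin L → Matrix (Fin m) (Fin m) ℝ)
    (hS : ∀ i, (S i).PosDef) (hT : ∀ i, (T i).PosDef)
    (J : Fin L → Matrix (Fin m) (Fin n) ℝ) :
    (arrowMat A₀ S T J).PosDef ∧
      (Matrix.of fun i j => (arrowMat A₀ S T J)⁻¹ (Sum.inl i) (Sum.inl j)) =
        (A₀ + ∑ i, (J i)ᵀ * ((S i)⁻¹ + (T i)⁻¹)⁻¹ * J i)⁻¹ := by
  classical
  set A : Matrix (Fin n) (Fin n) ℝ := A₀ + ∑ k, (J k)ᵀ * S k * J k with hA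
  set B : Matrix (Fin n) (Fin L × Fin m) ℝ :=
    Matrix.of (fun i p => (-((J p.1)ᵀ * S p.1)) i p.2) with hB
  set D : Matrix (Fin L × Fin m) (Fin L × Fin m) ℝ :=
    Matrix.of (fun p q => if p.1 = q.1 then (S p.1 + T p.1) p.2 q.2 else 0) with hD
  set K : Matrix (Fin n) (Fin n) ℝ :=
    A₀ + ∑ i, (J i)ᵀ * ((S i)⁻¹ + (T i)⁻¹)⁻¹ * J i with hK
  -- symmetry of S
  have hSsymm : ∀ k (a b : Fin m), S k a b = S k b a := by
    intro k a b
    have := congrFun (congrFun (hS k).1 a) b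
    simpa using this.symm
  -- Bᴴ
  have hBH : Bᴴ = Matrix.of (fun (p : Fin L × Fin m) j => (-(S p.1 * J p.1)) p.2 j) := by
    ext ⟨k, a⟩ j
    simp only [conjTranspose_apply, hB, of_apply, star_trivial, Matrix.neg_apply, Matrix.mul_apply,
      transpose_apply]
    rw [neg_inj]
    exact Finset.sum_congr rfl fun c _ => by rw [hSsymm k c a, mul_comm]
  -- arrowMat = fromBlocks
  have hMeq : arrowMat A₀ S T J = fromBlocks A B Bᴴ D := by
    ext p q
    rcases p with i | ⟨k, a⟩ <;> rcases q with j | ⟨l, b⟩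
    · simp [arrowMat, fromBlocks, hA, Matrix.add_apply]
    · simp [arrowMat, fromBlocks, hB]
    · rw [hBH]; simp [arrowMat, fromBlocks]
    · simp [arrowMat, fromBlocks, hD]
  -- D is positive definite
  have hSTpos : ∀ k, (S k + T k).PosDef := fun k => (hS k).add (hT k)
  have hquad : ∀ x : Fin L × Fin m → ℝ,
      x ⬝ᵥ (D *ᵥ x) = ∑ k, (fun a => x (k, a)) ⬝ᵥ ((S k + T k) *ᵥ fun a => x (k, a)) := by
    intro x
    simp only [dotProduct, mulVec, hD, of_apply, Fintype.sum_prod_type, dotProduct,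
      ite_mul, zero_mul, Finset.sum_ite_eq, Finset.mem_univ, if_pos]
    refine Finset.sum_congr rfl fun k _ => Finset.sum_congr rfl fun a _ => ?_
    congr 1
    rw [Finset.sum_comm]
    simp [Finset.sum_ite_eq]
  have hDpos : D.PosDef := by
    refine posDef_iff_dotProduct_mulVec.mpr ⟨?_, ?_⟩
    · ext ⟨k, a⟩ ⟨l, b⟩
      simp only [conjTranspose_apply, hD, of_apply, star_trivial]
      rcases eq_or_ne k l with rfl | h
      · simp only [if_pos rfl]
        have := congrFun (congrFun (hSTpos k).1 a) b
        simpa using this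
      · simp [h, Ne.symm h]
    · intro x hx
      rw [star_trivial, hquad]
      obtain ⟨⟨k₀, a₀⟩, hx0⟩ : ∃ p, x p ≠ 0 := by
        by_contra h
        push_neg at h
        exact hx (funext h)
      refine Finset.sum_pos' (fun k _ => ?_) ⟨k₀, Finset.mem_univ _, ?_⟩
      · have := (hSTpos k).posSemidef.dotProduct_mulVec_nonneg (fun a => x (k, a))
        simpa using this
      · have hk : (fun a => x (k₀, a)) ≠ 0 := fun h => hx0 (congrFun h a₀)
        have := (hSTpos k₀).dotProduct_mulVec_pos hk
        simpa using this
  -- explicit inverse of D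
  set E : Matrix (Fin L × Fin m) (Fin L × Fin m) ℝ :=
    Matrix.of (fun p q => if p.1 = q.1 then ((S p.1 + T p.1)⁻¹) p.2 q.2 else 0) with hE
  have hDE : D * E = 1 := by
    ext ⟨k, a⟩ ⟨l, b⟩
    simp only [Matrix.mul_apply, hD, hE, of_apply, Fintype.sum_prod_type,
      ite_mul, mul_ite, zero_mul, mul_zero]
    rw [Finset.sum_eq_single l (fun x _ hx => by simp [hx]) (fun h => absurd (Finset.mem_univ l) h)]
    simp only [if_pos rfl]
    rcases eq_or_ne k l with rfl | h
    · simp only [if_true, if_pos rfl]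
      have hmul : ∑ c, (S k + T k) a c * (S k + T k)⁻¹ c b = ((S k + T k) * (S k + T k)⁻¹) a b :=
        (Matrix.mul_apply).symm
      rw [hmul, Matrix.mul_nonsing_inv _ (hSTpos k).det_pos.ne'.isUnit]
      simp [Matrix.one_apply, Prod.ext_iff]
    · simp [h, Matrix.one_apply, Prod.ext_iff]
  haveI iD : Invertible D := invertibleOfRightInverse _ _ hDE
  have hinvD : (⅟D : Matrix (Fin L × Fin m) (Fin L × Fin m) ℝ) = E := by
    rw [invOf_eq_nonsing_inv]; exact inv_eq_right_inv hDE
  -- Schur complement computation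
  have hBE : B * E = Matrix.of (fun i p => (-((J p.1)ᵀ * S p.1 * (S p.1 + T p.1)⁻¹)) i p.2) := by
    ext i ⟨l, b⟩
    simp only [Matrix.mul_apply, hB, hE, of_apply, Fintype.sum_prod_type,
      mul_ite, mul_zero, Finset.sum_ite_eq, Finset.mem_univ, if_pos]
    rw [Finset.sum_eq_single l (fun x _ hx => by simp [hx]) (fun h => absurd (Finset.mem_univ l) h)]
    simp only [if_true, if_pos rfl, Matrix.mul_apply, Matrix.neg_apply, neg_mul, Finset.sum_neg_distrib,
      ← Finset.sum_neg_distrib]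
    exact Finset.sum_congr rfl fun c _ => by rw [Finset.sum_neg_distrib, neg_mul]
  have hBEB : B * E * Bᴴ = ∑ l, (J l)ᵀ * (S l * (S l + T l)⁻¹ * S l) * J l := by
    ext i j
    rw [Matrix.mul_apply, hBE, hBH]
    simp only [Matrix.sum_apply, of_apply, Fintype.sum_prod_type, Matrix.neg_apply, neg_mul_neg]
    refine Finset.sum_congr rfl fun l _ => ?_
    rw [show (J l)ᵀ * (S l * (S l + T l)⁻¹ * S l) * J l =
        ((J l)ᵀ * S l * (S l + T l)⁻¹) * (S l * J l) by
      simp only [Matrix.mul_assoc]]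
    rw [Matrix.mul_apply]
  have hSchurE : A - B * E * Bᴴ = K := by
    rw [hBEB, hA, hK, add_sub_assoc, ← Finset.sum_sub_distrib]
    congr 1
    refine Finset.sum_congr rfl fun l _ => ?_
    rw [← Matrix.sub_mul, ← Matrix.mul_sub, key_identity (hS l) (hT l)]
  have hKpos : K.PosDef := by
    rw [hK]
    refine hA₀.add_posSemidef ?_
    refine Finset.sum_induction _ _ (fun a b ha hb => ha.add hb) PosSemidef.zero fun i _ => ?_
    have hinv : ((S i)⁻¹ + (T i)⁻¹)⁻¹.PosDef := ((hS i).inv.add (hT i).inv).inv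
    have := hinv.posSemidef.conjTranspose_mul_mul_same (J i)
    simpa using this
  have hSch : A - B * ⅟D * Bᴴ = K := by rw [hinvD, hSchurE]
  haveI iSch : Invertible (A - B * ⅟D * Bᴴ) := by rw [hSch]; exact hKpos.isUnit.invertible
  haveI iM : Invertible (fromBlocks A B Bᴴ D) := fromBlocks₂₂Invertible A B Bᴴ D
  -- positive semidefiniteness / definiteness of M
  have hMsd : (fromBlocks A B Bᴴ D).PosSemidef := by
    rw [PosDef.fromBlocks₂₂ A B hDpos]
    have : D⁻¹ = E := inv_eq_right_inv hDE
    rw [this, hSchurE]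
    exact hKpos.posSemidef
  have hMpos : (fromBlocks A B Bᴴ D).PosDef := by
    refine posDef_iff_dotProduct_mulVec.mpr ⟨hMsd.1, fun x hx => ?_⟩
    rcases lt_or_eq_of_le (hMsd.dotProduct_mulVec_nonneg x) with h | h
    · exact h
    · exfalso
      have h0 : (fromBlocks A B Bᴴ D) *ᵥ x = 0 :=
        (hMsd.dotProduct_mulVec_zero_iff x).mp h.symm
      apply hx
      have : ⅟(fromBlocks A B Bᴴ D) *ᵥ ((fromBlocks A B Bᴴ D) *ᵥ x) = x := by
        rw [mulVec_mulVec, invOf_mul_self, one_mulVec]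
      rw [h0, mulVec_zero] at this
      exact this.symm
  constructor
  · rw [hMeq]; exact hMpos
  · have hMinv : (fromBlocks A B Bᴴ D)⁻¹ =
        fromBlocks (⅟(A - B * ⅟D * Bᴴ)) (-(⅟(A - B * ⅟D * Bᴴ) * B * ⅟D))
          (-(⅟D * Bᴴ * ⅟(A - B * ⅟D * Bᴴ))) (⅟D + ⅟D * Bᴴ * ⅟(A - B * ⅟D * Bᴴ) * B * ⅟D) := by
      rw [← invOf_eq_nonsing_inv, invOf_fromBlocks₂₂_eq]
    ext i j
    rw [of_apply, hMeq, hMinv, fromBlocks_apply₁₁]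
    have : ⅟(A - B * ⅟D * Bᴴ) = K⁻¹ := by
      rw [invOf_eq_nonsing_inv, hSch]
    rw [this, hK]
end

section
/- (Theorem 3, containment part: the distributed set-membership information fusion ellipsoid contains the intersection of the local ellipsoids.) Let n ≥ 1 and L ≥ 0, and let P₀, P₁, …, P_L be symmetric positive definite real n×n matrices with centers x̂₀, x̂₁, …, x̂_L ∈ ℝⁿ. Let τ₀, τ₁, …, τ_L ≥ 0 satisfy Σ_{i=0}^{L} τᵢ ≤ 1, and assume the matrix X⁻¹ := Σ_{i=0}^{L} τᵢ·Pᵢ⁻¹ is positive definite (e.g., this holds whenever τ₀ > 0). Define the fused center x̂ = X·(Σ_{i=0}^{L} τᵢ Pᵢ⁻¹ x̂ᵢ). Then for every x ∈ ℝⁿ satisfying (x − x̂ᵢ)ᵀ Pᵢ⁻¹ (x − x̂ᵢ) ≤ 1 for all i = 0, 1, …, L, one has (x − x̂)ᵀ X⁻¹ (x − x̂) ≤ 1. -/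
open Matrix

private lemma sum_mulVec' {n : ℕ} {ι : Type*} (s : Finset ι)
    (M : ι → Matrix (Fin n) (Fin n) ℝ) (v : Fin n → ℝ) :
    (∑ i ∈ s, M i) *ᵥ v = ∑ i ∈ s, M i *ᵥ v := by
  induction s using Finset.cons_induction with
  | empty => simp
  | cons a s h ih => simp [Finset.sum_cons, Matrix.add_mulVec, ih]

private lemma dotProduct_sum' {n : ℕ} {ι : Type*} (s : Finset ι)
    (u : Fin n → ℝ) (f : ι → Fin n → ℝ) :
    u ⬝ᵥ (∑ i ∈ s, f i) = ∑ i ∈ s, u ⬝ᵥ f i := by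
  induction s using Finset.cons_induction with
  | empty => simp
  | cons a s h ih => simp [Finset.sum_cons, dotProduct_add, ih]

private lemma quad_expand {n : ℕ} (A : Matrix (Fin n) (Fin n) ℝ) (hA : Aᵀ = A)
    (x y : Fin n → ℝ) :
    (x - y) ⬝ᵥ (A *ᵥ (x - y)) =
      x ⬝ᵥ (A *ᵥ x) - 2 * (x ⬝ᵥ (A *ᵥ y)) + y ⬝ᵥ (A *ᵥ y) := by
  have hsym : ∀ u v : Fin n → ℝ, u ⬝ᵥ (A *ᵥ v) = v ⬝ᵥ (A *ᵥ u) := by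
    intro u v
    rw [Matrix.dotProduct_mulVec, ← Matrix.mulVec_transpose, hA, dotProduct_comm]
  rw [Matrix.mulVec_sub, dotProduct_sub, sub_dotProduct,
    sub_dotProduct, hsym y x]
  ring

/-- Theorem 3, containment part. Given positive definite shape
matrices `P₀, …, P_L` with centers `x̂₀, …, x̂_L`, nonnegative weights `τᵢ` with
`Στᵢ ≤ 1` such that `Y := Σ τᵢ Pᵢ⁻¹` is positive definite, the fused ellipsoid
with inverse shape matrix `Y` and center `x̂ = Y⁻¹ (Σ τᵢ Pᵢ⁻¹ x̂ᵢ)` contains the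
intersection of the ellipsoids `E(x̂ᵢ, Pᵢ)`. -/
theorem distributed_fusion_containment {n L : ℕ} (hn : 1 ≤ n)
    (P : Fin (L + 1) → Matrix (Fin n) (Fin n) ℝ) (hP : ∀ i, (P i).PosDef)
    (xh : Fin (L + 1) → Fin n → ℝ)
    (τ : Fin (L + 1) → ℝ) (hτ : ∀ i, 0 ≤ τ i) (hsum : ∑ i, τ i ≤ 1)
    (Y : Matrix (Fin n) (Fin n) ℝ) (hY : Y = ∑ i, τ i • (P i)⁻¹)
    (hYpd : Y.PosDef)
    (xf : Fin n → ℝ) (hxf : xf = Y⁻¹ *ᵥ (∑ i, τ i • ((P i)⁻¹ *ᵥ xh i))) :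
    ∀ x : Fin n → ℝ,
      (∀ i, (x - xh i) ⬝ᵥ ((P i)⁻¹ *ᵥ (x - xh i)) ≤ 1) →
      (x - xf) ⬝ᵥ (Y *ᵥ (x - xf)) ≤ 1 := by
  intro x hx
  set A : Fin (L + 1) → Matrix (Fin n) (Fin n) ℝ := fun i => (P i)⁻¹ with hA
  have hAsym : ∀ i, (A i)ᵀ = A i := fun i => ((hP i).1.inv).eq
  have hApsd : ∀ i, (A i).PosSemidef := fun i => ((hP i).inv).posSemidef
  have hYsym : Yᵀ = Y := hYpd.1.eq
  set b : Fin n → ℝ := ∑ i, τ i • (A i *ᵥ xh i) with hb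
  -- Y *ᵥ xf = b
  have hdet : IsUnit Y.det := isUnit_iff_ne_zero.mpr (ne_of_gt hYpd.det_pos)
  have hYxf : Y *ᵥ xf = b := by
    rw [hxf, Matrix.mulVec_mulVec, Matrix.mul_nonsing_inv _ hdet, Matrix.one_mulVec]
  -- expansion of Y-quadratic forms via the sum
  have hYmv : ∀ v : Fin n → ℝ, Y *ᵥ v = ∑ i, τ i • (A i *ᵥ v) := by
    intro v
    rw [hY, sum_mulVec']
    exact Finset.sum_congr rfl fun i _ => by rw [Matrix.smul_mulVec]
  have hYqf : ∀ u v : Fin n → ℝ, u ⬝ᵥ (Y *ᵥ v) = ∑ i, τ i * (u ⬝ᵥ (A i *ᵥ v)) := by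
    intro u v
    rw [hYmv, dotProduct_sum']
    exact Finset.sum_congr rfl fun i _ => by
      rw [dotProduct_smul]; rfl
  have hub : ∀ u : Fin n → ℝ, u ⬝ᵥ b = ∑ i, τ i * (u ⬝ᵥ (A i *ᵥ xh i)) := by
    intro u
    rw [hb, dotProduct_sum']
    exact Finset.sum_congr rfl fun i _ => by
      rw [dotProduct_smul]; rfl
  -- key identity
  have key : (x - xf) ⬝ᵥ (Y *ᵥ (x - xf)) +
      ∑ i, τ i * ((xf - xh i) ⬝ᵥ (A i *ᵥ (xf - xh i))) =
      ∑ i, τ i * ((x - xh i) ⬝ᵥ (A i *ᵥ (x - xh i))) := by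
    have e1 : ∀ z : Fin n → ℝ, ∑ i, τ i * ((z - xh i) ⬝ᵥ (A i *ᵥ (z - xh i))) =
        z ⬝ᵥ (Y *ᵥ z) - 2 * (z ⬝ᵥ b) + ∑ i, τ i * (xh i ⬝ᵥ (A i *ᵥ xh i)) := by
      intro z
      rw [hYqf, hub, Finset.mul_sum, ← Finset.sum_sub_distrib, ← Finset.sum_add_distrib]
      exact Finset.sum_congr rfl fun i _ => by
        rw [quad_expand (A i) (hAsym i)]; ring
    have e2 : (x - xf) ⬝ᵥ (Y *ᵥ (x - xf)) =
        x ⬝ᵥ (Y *ᵥ x) - 2 * (x ⬝ᵥ b) + xf ⬝ᵥ b := by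
      rw [quad_expand Y hYsym, hYxf]
    have e3 : xf ⬝ᵥ (Y *ᵥ xf) = xf ⬝ᵥ b := by rw [hYxf]
    rw [e1 x, e1 xf, e2, e3]
    ring
  -- nonnegativity of the residual sum
  have hres : 0 ≤ ∑ i, τ i * ((xf - xh i) ⬝ᵥ (A i *ᵥ (xf - xh i))) := by
    refine Finset.sum_nonneg fun i _ => mul_nonneg (hτ i) ?_
    have := (hApsd i).re_dotProduct_nonneg (xf - xh i)
    simpa using this
  -- combine
  have hle : ∑ i, τ i * ((x - xh i) ⬝ᵥ (A i *ᵥ (x - xh i))) ≤ ∑ i, τ i := by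
    refine Finset.sum_le_sum fun i _ => ?_
    calc τ i * ((x - xh i) ⬝ᵥ (A i *ᵥ (x - xh i))) ≤ τ i * 1 :=
          mul_le_mul_of_nonneg_left (hx i) (hτ i)
      _ = τ i := mul_one _
  linarith [key, hres, hle, hsum]
end

section
/- (Decoupling lemma, sufficiency/attainment direction, invertible case.) Let X₁₁ be a real symmetric p×p matrix, X₂₂ a symmetric positive definite real q×q matrix, X₁₂ a real p×q matrix, and B a real n×q matrix. If the 2×2 block matrix [[X₁₁, X₁₂], [X₁₂ᵀ, X₂₂]] is positive semidefinite, then setting X = B·X₂₂⁻¹·Bᵀ and Z = B·X₂₂⁻¹·X₁₂ᵀ, the 3×3 block matrix [[X, Z, B], [Zᵀ, X₁₁, X₁₂], [Bᵀ, X₁₂ᵀ, X₂₂]] is positive semidefinite. -/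
open Matrix

lemma fromCols_add' {m n₁ n₂ : Type*} (A C : Matrix m n₁ ℝ) (B D : Matrix m n₂ ℝ) :
    Matrix.fromCols A B + Matrix.fromCols C D = Matrix.fromCols (A + C) (B + D) := by
  ext i j; cases j <;> simp

lemma fromRows_add' {m₁ m₂ n : Type*} (A C : Matrix m₁ n ℝ) (B D : Matrix m₂ n ℝ) :
    Matrix.fromRows A B + Matrix.fromRows C D = Matrix.fromRows (A + C) (B + D) := by
  ext i j; cases i <;> simp

/-- Decoupling lemma, sufficiency/attainment direction, invertible
case. If `[[X₁₁, X₁₂], [X₁₂ᵀ, X₂₂]] ⪰ 0` with `X₂₂` positive definite, then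
with `X = B X₂₂⁻¹ Bᵀ` and `Z = B X₂₂⁻¹ X₁₂ᵀ`, the 3×3 block matrix
`[[X, Z, B], [Zᵀ, X₁₁, X₁₂], [Bᵀ, X₁₂ᵀ, X₂₂]]` is positive semidefinite. -/
theorem decoupling_attainment {n p q : ℕ}
    (X₁₁ : Matrix (Fin p) (Fin p) ℝ) (hX₁₁ : X₁₁.IsHermitian)
    (X₂₂ : Matrix (Fin q) (Fin q) ℝ) (hX₂₂ : X₂₂.PosDef)
    (X₁₂ : Matrix (Fin p) (Fin q) ℝ)
    (B : Matrix (Fin n) (Fin q) ℝ)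
    (hInner : (Matrix.fromBlocks X₁₁ X₁₂ X₁₂ᵀ X₂₂).PosSemidef)
    (X : Matrix (Fin n) (Fin n) ℝ) (hXdef : X = B * X₂₂⁻¹ * Bᵀ)
    (Z : Matrix (Fin n) (Fin p) ℝ) (hZdef : Z = B * X₂₂⁻¹ * X₁₂ᵀ) :
    (Matrix.fromBlocks X (Matrix.fromCols Z B)
      (Matrix.fromRows Zᵀ Bᵀ)
      (Matrix.fromBlocks X₁₁ X₁₂ X₁₂ᵀ X₂₂)).PosSemidef := by
  have hXsym : X₂₂ᵀ = X₂₂ := hX₂₂.isHermitian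
  have hWt : (X₂₂⁻¹)ᵀ = X₂₂⁻¹ := by
    rw [Matrix.transpose_nonsing_inv, hXsym]
  have hunit : IsUnit X₂₂.det := (isUnit_iff_isUnit_det X₂₂).mp hX₂₂.isUnit
  have hXW : X₂₂ * X₂₂⁻¹ = 1 := Matrix.mul_nonsing_inv X₂₂ hunit
  have hWX : X₂₂⁻¹ * X₂₂ = 1 := Matrix.nonsing_inv_mul X₂₂ hunit
  have h1 : X₂₂ * (X₂₂⁻¹ * Bᵀ) = Bᵀ := by
    rw [← Matrix.mul_assoc, hXW, Matrix.one_mul]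
  set L : Matrix (Fin p ⊕ Fin q) (Fin n ⊕ (Fin p ⊕ Fin q)) ℝ :=
    Matrix.fromBlocks 0 (Matrix.fromCols 1 0) (X₂₂⁻¹ * Bᵀ) (Matrix.fromCols 0 1) with hL
  have key : (Matrix.fromBlocks X (Matrix.fromCols Z B)
      (Matrix.fromRows Zᵀ Bᵀ)
      (Matrix.fromBlocks X₁₁ X₁₂ X₁₂ᵀ X₂₂)) =
      Lᴴ * (Matrix.fromBlocks X₁₁ X₁₂ X₁₂ᵀ X₂₂) * L := by
    rw [hL, Matrix.conjTranspose_eq_transpose_of_trivial, Matrix.fromBlocks_transpose,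
      Matrix.transpose_fromCols, Matrix.transpose_fromCols,
      Matrix.fromBlocks_multiply, Matrix.fromBlocks_multiply]
    simp only [Matrix.transpose_zero, Matrix.transpose_one, Matrix.transpose_mul, hWt,
      Matrix.transpose_transpose, Matrix.zero_mul, Matrix.mul_zero,
      Matrix.fromRows_mul, Matrix.mul_fromCols, Matrix.one_mul, Matrix.mul_one,
      add_zero, zero_add]
    simp only [hXdef, hZdef, fromCols_add', fromRows_add', add_zero, zero_add,
      Matrix.fromRows_mul, Matrix.mul_assoc, hWX, h1, Matrix.mul_one,
      Matrix.transpose_mul, hWt, Matrix.transpose_transpose,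
      Matrix.fromCols_fromRows_eq_fromBlocks]
  rw [key]
  exact hInner.conjTranspose_mul_mul_same L
end
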